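/- Fix θ*, θ_t ∈ ℝ^d, σ > 0 and L ≥ 0. Let p be a likelihood family such that for every x ∈ ℝ^k the map θ ↦ log p(x|θ) is differentiable with L-Lipschitz gradient g(x;·) = ∇_θ log p(x|·). For each x define Z_σ(θ_t;x) = ∫ p(x|θ) q_σ(θ|θ_t) dθ ∈ (0,∞), the posterior π_{θ_t}(θ|x) = p(x|θ) q_σ(θ|θ_t)/Z_σ(θ_t;x), the optimal FSM estimator S*(x;θ_t) = ∫ g(x;θ) π_{θ_t}(θ|x) dθ (assumed well-defined), and M(x) = sup_{θ∈ℝ^d} p(x|θ)/Z_σ(θ_t;x), assumed finite for almost every x and integrable with respect to the density p(·|θ*). Then, with x₀ distributed with density p(·|θ*), E_{x₀}‖ S*(x₀;θ_t) − g(x₀;θ_t) ‖ ≤ L · √d · σ · E_{x₀}[ M(x₀) ]. -/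

import Mathlib

open MeasureTheory

/-- The isotropic Gaussian proposal density `q_σ(θ | θt) = (2πσ²)^{-d/2} exp(-‖θ-θt‖²/(2σ²))`
on `ℝ^d`. -/
noncomputable def gaussianProposal (d : ℕ) (σ : ℝ)
    (θ θt : EuclideanSpace ℝ (Fin d)) : ℝ :=
  (2 * Real.pi * σ ^ 2) ^ (-(d : ℝ) / 2) * Real.exp (-‖θ - θt‖ ^ 2 / (2 * σ ^ 2))

/-!
Writing `w x θ = p(x|θ) q_σ(θ|θt) / Z_σ(θt;x)` for the posterior density, which integrates to
one, the bias is `∫ w x θ • (g x θ - g x θt) dθ`, so the Lipschitz bound on `g x` controls it by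
`L ∫ w x θ ‖θ - θt‖ dθ`. Since `w x θ ≤ M(x) q_σ(θ|θt)`, it remains to bound the first absolute
moment of the Gaussian by the square root of its second moment `d σ²`; integrating the resulting
pointwise bound `L √d σ M(x)` against `p(·|θ*)` gives the claim.
-/

open Real

theorem integral_mul_le_sqrt_integral_mul_sq {α : Type*} [MeasurableSpace α] {μ : Measure α}
    {q f : α → ℝ} (hq : ∀ a, 0 ≤ q a) (hq_one : ∫ a, q a ∂μ = 1)
    (hqf : Integrable (fun a => q a * f a) μ) (hqf2 : Integrable (fun a => q a * f a ^ 2) μ) :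
    ∫ a, q a * f a ∂μ ≤ √(∫ a, q a * f a ^ 2 ∂μ) := by
  set m := ∫ a, q a * f a ∂μ
  have hq_int : Integrable q μ := .of_integral_ne_zero (by simp [hq_one])
  have hvar : ∫ a, q a * (f a - m) ^ 2 ∂μ = ∫ a, q a * f a ^ 2 ∂μ - m ^ 2 := by
    calc ∫ a, q a * (f a - m) ^ 2 ∂μ
        = ∫ a, (q a * f a ^ 2 - 2 * m * (q a * f a) + m ^ 2 * q a) ∂μ := by
          congr 1; ext a; ring
      _ = ∫ a, q a * f a ^ 2 ∂μ - m ^ 2 := by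
          rw [integral_add (f := fun a => q a * f a ^ 2 - 2 * m * (q a * f a))
              (hqf2.sub (hqf.const_mul _)) (hq_int.const_mul _),
            integral_sub hqf2 (hqf.const_mul _), integral_const_mul, integral_const_mul, hq_one]
          ring
  have hsq : m ^ 2 ≤ ∫ a, q a * f a ^ 2 ∂μ := by
    have hvar_nonneg : 0 ≤ ∫ a, q a * (f a - m) ^ 2 ∂μ :=
      integral_nonneg fun a => mul_nonneg (hq a) (sq_nonneg (f a - m))
    linarith
  exact (le_abs_self m).trans (abs_le_sqrt hsq)

theorem mul_rexp_neg_mul_le {b : ℝ} (hb : 0 < b) (t : ℝ) :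
    t * rexp (-b * t) ≤ 2 / b * rexp (-(b / 2) * t) := by
  have hlin : b / 2 * t + 1 ≤ rexp (b / 2 * t) := add_one_le_exp _
  have hsplit : rexp (-(b / 2) * t) = rexp (b / 2 * t) * rexp (-b * t) := by
    rw [← exp_add]; ring_nf
  rw [hsplit, ← mul_assoc]
  refine mul_le_mul_of_nonneg_right ?_ (exp_pos _).le
  rw [div_mul_eq_mul_div, le_div_iff₀ hb]
  nlinarith

section GaussianIntegrals

variable {V : Type*} [NormedAddCommGroup V] [InnerProductSpace ℝ V] [FiniteDimensional ℝ V]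
  [MeasurableSpace V] [BorelSpace V] {b : ℝ}

theorem integrable_rexp_neg_mul_sq_norm (hb : 0 < b) :
    Integrable (fun v : V => rexp (-b * ‖v‖ ^ 2)) := by
  simpa [Complex.norm_exp, ← Complex.ofReal_pow] using
    (GaussianFourier.integrable_cexp_neg_mul_sq_norm_add (b := (b : ℂ)) (by simpa using hb) 0
      (0 : V)).norm

theorem integrable_sq_norm_mul_rexp_neg_mul_sq_norm (hb : 0 < b) :
    Integrable (fun v : V => ‖v‖ ^ 2 * rexp (-b * ‖v‖ ^ 2)) :=
  ((integrable_rexp_neg_mul_sq_norm (half_pos hb)).const_mul (2 / b)).mono'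
    (by fun_prop) (ae_of_all _ fun v => by
      rw [Real.norm_of_nonneg (by positivity)]
      exact mul_rexp_neg_mul_le hb _)

/-- Obtained by differentiating `∫ exp (-b ‖v‖²) = (π / b) ^ (finrank ℝ V / 2)` in `b`. -/
theorem integral_sq_norm_mul_rexp_neg_mul_sq_norm (hb : 0 < b) :
    ∫ v : V, ‖v‖ ^ 2 * rexp (-b * ‖v‖ ^ 2)
      = Module.finrank ℝ V / (2 * b) * (π / b) ^ (Module.finrank ℝ V / 2 : ℝ) := by
  set c : ℝ := Module.finrank ℝ V / 2
  have hderiv := (hasDerivAt_integral_of_dominated_loc_of_deriv_le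
    (F := fun (x : ℝ) (v : V) => rexp (-x * ‖v‖ ^ 2))
    (F' := fun (x : ℝ) (v : V) => -(‖v‖ ^ 2 * rexp (-x * ‖v‖ ^ 2)))
    (bound := fun v : V => ‖v‖ ^ 2 * rexp (-(b / 2) * ‖v‖ ^ 2))
    (Metric.ball_mem_nhds b (half_pos hb)) (.of_forall fun x => by fun_prop)
    (integrable_rexp_neg_mul_sq_norm hb) (by fun_prop)
    (.of_forall fun v x hx => ?bound)
    (integrable_sq_norm_mul_rexp_neg_mul_sq_norm (half_pos hb))
    (.of_forall fun v x _ => ?deriv)).2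
  case bound =>
    have hx' : b / 2 ≤ x := by
      rw [Metric.mem_ball, Real.dist_eq] at hx; linarith [(abs_lt.mp hx).1]
    rw [norm_neg, Real.norm_of_nonneg (by positivity)]
    gcongr
  case deriv =>
    simpa [mul_comm] using ((hasDerivAt_id x).neg.mul_const (‖v‖ ^ 2)).exp
  have hclosed : HasDerivAt (fun x : ℝ => ∫ v : V, rexp (-x * ‖v‖ ^ 2))
      (π ^ c * (-c * b ^ (-c - 1))) b := by
    refine ((hasDerivAt_rpow_const (Or.inl hb.ne')).const_mul _).congr_of_eventuallyEq ?_
    filter_upwards [lt_mem_nhds hb] with x hx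
    rw [GaussianFourier.integral_rexp_neg_mul_sq_norm hx, div_rpow pi_pos.le hx.le,
      rpow_neg hx.le, div_eq_mul_inv]
  have hmoment := hderiv.unique hclosed
  rw [integral_neg, neg_eq_iff_eq_neg] at hmoment
  rw [hmoment, div_rpow pi_pos.le hb.le,
    show -c - 1 = -c + -1 by ring, rpow_add hb, rpow_neg hb.le, rpow_neg_one]
  field_simp
  ring

end GaussianIntegrals

section GaussianProposal

variable {d : ℕ} {σ : ℝ}

theorem gaussianProposal_nonneg (θ θt : EuclideanSpace ℝ (Fin d)) :
    0 ≤ gaussianProposal d σ θ θt := by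
  unfold gaussianProposal; positivity

theorem gaussianProposal_eq (θ θt : EuclideanSpace ℝ (Fin d)) :
    gaussianProposal d σ θ θt
      = (2 * π * σ ^ 2) ^ (-(d : ℝ) / 2) * rexp (-(2 * σ ^ 2)⁻¹ * ‖θ - θt‖ ^ 2) := by
  unfold gaussianProposal; ring_nf

variable (hσ : 0 < σ) (θt : EuclideanSpace ℝ (Fin d))
include hσ

theorem gaussianProposal_normalization :
    (2 * π * σ ^ 2) ^ (-(d : ℝ) / 2) * (π / (2 * σ ^ 2)⁻¹) ^ ((d : ℝ) / 2) = 1 := by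
  rw [div_inv_eq_mul, mul_right_comm, mul_comm π, ← rpow_add (by positivity)]
  simp [neg_div]

theorem integral_gaussianProposal : ∫ θ, gaussianProposal d σ θ θt = 1 := by
  simp_rw [gaussianProposal_eq _ θt]
  rw [integral_const_mul, integral_sub_right_eq_self (fun u => rexp (-(2 * σ ^ 2)⁻¹ * ‖u‖ ^ 2)),
    GaussianFourier.integral_rexp_neg_mul_sq_norm (by positivity), finrank_euclideanSpace_fin,
    gaussianProposal_normalization hσ]

theorem integrable_gaussianProposal : Integrable fun θ => gaussianProposal d σ θ θt := by
  simp_rw [gaussianProposal_eq _ θt]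
  exact ((integrable_rexp_neg_mul_sq_norm (by positivity)).comp_sub_right θt).const_mul _

theorem integrable_gaussianProposal_mul_sq_norm_sub :
    Integrable fun θ => gaussianProposal d σ θ θt * ‖θ - θt‖ ^ 2 := by
  simp_rw [gaussianProposal_eq _ θt, mul_assoc ((2 * π * σ ^ 2) ^ (-(d : ℝ) / 2)),
    mul_comm (rexp _)]
  exact ((integrable_sq_norm_mul_rexp_neg_mul_sq_norm (by positivity)).comp_sub_right
    θt).const_mul _

theorem integral_gaussianProposal_mul_sq_norm_sub :
    ∫ θ, gaussianProposal d σ θ θt * ‖θ - θt‖ ^ 2 = d * σ ^ 2 := by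
  simp_rw [gaussianProposal_eq _ θt, mul_assoc ((2 * π * σ ^ 2) ^ (-(d : ℝ) / 2)),
    mul_comm (rexp _)]
  rw [integral_const_mul,
    integral_sub_right_eq_self (fun u => ‖u‖ ^ 2 * rexp (-(2 * σ ^ 2)⁻¹ * ‖u‖ ^ 2)),
    integral_sq_norm_mul_rexp_neg_mul_sq_norm (by positivity), finrank_euclideanSpace_fin,
    mul_left_comm ((2 * π * σ ^ 2) ^ _), gaussianProposal_normalization hσ, mul_one]
  field_simp

theorem integrable_gaussianProposal_mul_norm_sub :
    Integrable fun θ => gaussianProposal d σ θ θt * ‖θ - θt‖ :=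
  ((integrable_gaussianProposal hσ θt).add
    (integrable_gaussianProposal_mul_sq_norm_sub hσ θt)).mono'
    ((integrable_gaussianProposal hσ θt).aestronglyMeasurable.mul (by fun_prop))
    (ae_of_all _ fun θ => by
      have hq := gaussianProposal_nonneg (σ := σ) θ θt
      rw [Real.norm_of_nonneg (by positivity), Pi.add_apply]
      nlinarith [sq_nonneg (‖θ - θt‖ - 1), norm_nonneg (θ - θt)])

theorem integral_gaussianProposal_mul_norm_sub_le :
    ∫ θ, gaussianProposal d σ θ θt * ‖θ - θt‖ ≤ √d * σ := by
  calc ∫ θ, gaussianProposal d σ θ θt * ‖θ - θt‖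
      ≤ √(∫ θ, gaussianProposal d σ θ θt * ‖θ - θt‖ ^ 2) :=
        integral_mul_le_sqrt_integral_mul_sq (gaussianProposal_nonneg · θt)
          (integral_gaussianProposal hσ θt) (integrable_gaussianProposal_mul_norm_sub hσ θt)
          (integrable_gaussianProposal_mul_sq_norm_sub hσ θt)
    _ = √d * σ := by
        rw [integral_gaussianProposal_mul_sq_norm_sub hσ θt, sqrt_mul (Nat.cast_nonneg d),
          sqrt_sq hσ.le]

end GaussianProposal

theorem norm_integral_smul_sub_le_of_lipschitzWith {α E : Type*} [PseudoMetricSpace α]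
    [MeasurableSpace α] {μ : Measure α} [NormedAddCommGroup E] [NormedSpace ℝ E] [CompleteSpace E]
    {w : α → ℝ} {G : α → E} {K : NNReal} (θ₀ : α) (hw : ∀ θ, 0 ≤ w θ)
    (hw_one : ∫ θ, w θ ∂μ = 1) (hwG : Integrable (fun θ => w θ • G θ) μ)
    (hwd : Integrable (fun θ => w θ * dist θ θ₀) μ) (hG : LipschitzWith K G) :
    ‖(∫ θ, w θ • G θ ∂μ) - G θ₀‖ ≤ K * ∫ θ, w θ * dist θ θ₀ ∂μ := by
  have hw_int : Integrable w μ := .of_integral_ne_zero (by simp [hw_one])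
  have hcenter : (∫ θ, w θ • G θ ∂μ) - G θ₀ = ∫ θ, w θ • (G θ - G θ₀) ∂μ := by
    simp_rw [smul_sub]
    rw [integral_sub hwG (hw_int.smul_const _), integral_smul_const, hw_one, one_smul]
  rw [hcenter, ← integral_const_mul]
  refine norm_integral_le_of_norm_le (hwd.const_mul K) (ae_of_all _ fun θ => ?_)
  calc ‖w θ • (G θ - G θ₀)‖ = w θ * dist (G θ) (G θ₀) := by
        rw [norm_smul, Real.norm_of_nonneg (hw θ), dist_eq_norm]
    _ ≤ w θ * (K * dist θ θ₀) := mul_le_mul_of_nonneg_left (hG.dist_le_mul θ θ₀) (hw θ)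
    _ = K * (w θ * dist θ θ₀) := by ring

theorem norm_integral_posterior_smul_sub_le {d : ℕ} {σ Z m : ℝ} {K : NNReal} (hσ : 0 < σ)
    {E : Type*} [NormedAddCommGroup E] [NormedSpace ℝ E] [CompleteSpace E]
    {θt : EuclideanSpace ℝ (Fin d)} {ℓ : EuclideanSpace ℝ (Fin d) → ℝ}
    {G : EuclideanSpace ℝ (Fin d) → E} (hℓ : ∀ θ, 0 ≤ ℓ θ)
    (hZ : Z = ∫ θ, ℓ θ * gaussianProposal d σ θ θt) (hZ_pos : 0 < Z) (hm : ∀ θ, ℓ θ / Z ≤ m)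
    (hG : LipschitzWith K G)
    (hint : Integrable fun θ => (ℓ θ * gaussianProposal d σ θ θt / Z) • G θ) :
    ‖(∫ θ, (ℓ θ * gaussianProposal d σ θ θt / Z) • G θ) - G θt‖ ≤ K * √d * σ * m := by
  set w := fun θ => ℓ θ * gaussianProposal d σ θ θt / Z
  have hw_nonneg : ∀ θ, 0 ≤ w θ := fun θ =>
    div_nonneg (mul_nonneg (hℓ θ) (gaussianProposal_nonneg θ θt)) hZ_pos.le
  have hw_one : ∫ θ, w θ = 1 := by rw [integral_div, ← hZ, div_self hZ_pos.ne']
  have hw_le : ∀ θ, w θ ≤ m * gaussianProposal d σ θ θt := fun θ =>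
    calc w θ = ℓ θ / Z * gaussianProposal d σ θ θt := mul_div_right_comm _ _ _
      _ ≤ m * gaussianProposal d σ θ θt :=
        mul_le_mul_of_nonneg_right (hm θ) (gaussianProposal_nonneg θ θt)
  have hwd_le : ∀ θ, w θ * dist θ θt ≤ m * (gaussianProposal d σ θ θt * ‖θ - θt‖) := fun θ => by
    rw [dist_eq_norm, ← mul_assoc]
    exact mul_le_mul_of_nonneg_right (hw_le θ) (norm_nonneg _)
  have hm_nonneg : 0 ≤ m := (div_nonneg (hℓ θt) hZ_pos.le).trans (hm θt)
  have hwd : Integrable fun θ => w θ * dist θ θt :=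
    ((integrable_gaussianProposal_mul_norm_sub hσ θt).const_mul m).mono'
      ((Integrable.of_integral_ne_zero (by simp [hw_one])).aestronglyMeasurable.mul
        (by fun_prop))
      (ae_of_all _ fun θ => by
        rw [Real.norm_of_nonneg (mul_nonneg (hw_nonneg θ) dist_nonneg)]
        exact hwd_le θ)
  calc ‖(∫ θ, w θ • G θ) - G θt‖ ≤ K * ∫ θ, w θ * dist θ θt :=
        norm_integral_smul_sub_le_of_lipschitzWith θt hw_nonneg hw_one hint hwd hG
    _ ≤ K * ∫ θ, m * (gaussianProposal d σ θ θt * ‖θ - θt‖) := by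
        gcongr
        · exact (integrable_gaussianProposal_mul_norm_sub hσ θt).const_mul m
        · exact hwd_le
    _ ≤ K * (m * (√d * σ)) := by
        rw [integral_const_mul]
        gcongr
        exact integral_gaussianProposal_mul_norm_sub_le hσ θt
    _ = K * √d * σ * m := by ring

theorem fsm_bias_characterization_general
    (d k : ℕ)
    (θstar θt : EuclideanSpace ℝ (Fin d))
    (σ L : ℝ) (hσ : 0 < σ) (hL : 0 ≤ L)
    -- `p θ x` is the likelihood family `p(x|θ)`
    (p : EuclideanSpace ℝ (Fin d) → EuclideanSpace ℝ (Fin k) → ℝ)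
    (hp_pos : ∀ θ x, 0 < p θ x)
    -- `g x = ∇_θ log p(x|·)`, with `L`-Lipschitz gradient for every `x`
    (g : EuclideanSpace ℝ (Fin k) → EuclideanSpace ℝ (Fin d) → EuclideanSpace ℝ (Fin d))
    (hgLip : ∀ x, LipschitzWith (Real.toNNReal L) (g x))
    -- the normalizing constants `Z_σ(θt; x) ∈ (0, ∞)`
    (Z : EuclideanSpace ℝ (Fin k) → ℝ)
    (hZ : ∀ x, Z x = ∫ θ, p θ x * gaussianProposal d σ θ θt)
    (hZ_pos : ∀ x, 0 < Z x)
    -- the optimal FSM estimator `S*(x; θt)`, assumed well-defined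
    (Sstar : EuclideanSpace ℝ (Fin k) → EuclideanSpace ℝ (Fin d))
    (hSstar : ∀ x, Sstar x
      = ∫ θ, (p θ x * gaussianProposal d σ θ θt / Z x) • g x θ)
    (hSstar_int : ∀ x,
      Integrable (fun θ => (p θ x * gaussianProposal d σ θ θt / Z x) • g x θ))
    -- `M(x) = sup_θ p(x|θ)/Z_σ(θt;x)`, finite for a.e. x and integrable w.r.t. `p(·|θ*)`
    (M : EuclideanSpace ℝ (Fin k) → ℝ)
    (hM : ∀ x, M x = ⨆ θ : EuclideanSpace ℝ (Fin d), p θ x / Z x)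
    (hM_fin : ∀ᵐ x, BddAbove (Set.range fun θ : EuclideanSpace ℝ (Fin d) => p θ x / Z x)) :
    ∫⁻ x, ENNReal.ofReal (‖Sstar x - g x θt‖ * p θstar x)
      ≤ ENNReal.ofReal (L * Real.sqrt d * σ)
          * ∫⁻ x, ENNReal.ofReal (M x * p θstar x) := by
  have hbias : ∀ x, BddAbove (Set.range fun θ => p θ x / Z x) →
      ‖Sstar x - g x θt‖ ≤ L * √d * σ * M x := fun x hbdd => by
    have := norm_integral_posterior_smul_sub_le hσ (fun θ => (hp_pos θ x).le) (hZ x) (hZ_pos x)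
      (fun θ => (hM x).symm ▸ le_ciSup hbdd θ) (hgLip x) (hSstar_int x)
    rwa [Real.coe_toNNReal L hL, ← hSstar x] at this
  calc ∫⁻ x, ENNReal.ofReal (‖Sstar x - g x θt‖ * p θstar x)
      ≤ ∫⁻ x, ENNReal.ofReal (L * √d * σ) * ENNReal.ofReal (M x * p θstar x) := by
        refine lintegral_mono_ae ?_
        filter_upwards [hM_fin] with x hbdd
        rw [← ENNReal.ofReal_mul (by positivity), ← mul_assoc]
        exact ENNReal.ofReal_le_ofReal
          (mul_le_mul_of_nonneg_right (hbias x hbdd) (hp_pos θstar x).le)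
    _ = ENNReal.ofReal (L * √d * σ) * ∫⁻ x, ENNReal.ofReal (M x * p θstar x) :=
        lintegral_const_mul' _ _ ENNReal.ofReal_ne_top

/-- **Bias characterization of the FSM estimator** (Theorem 4 of the paper, rigorous form):
with `x₀` distributed with density `p(·|θ*)`, the expected bias of the Bayes-optimal FSM
estimator satisfies `E‖S*(x₀;θt) − g(x₀;θt)‖ ≤ L √d σ E[M(x₀)]`, where
`M(x) = sup_θ p(x|θ)/Z_σ(θt;x)`. -/
theorem fsm_bias_characterization
    (d k : ℕ) (hd : 0 < d) (hk : 0 < k)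
    (θstar θt : EuclideanSpace ℝ (Fin d))
    (σ L : ℝ) (hσ : 0 < σ) (hL : 0 ≤ L)
    -- `p θ x` is the likelihood family `p(x|θ)`
    (p : EuclideanSpace ℝ (Fin d) → EuclideanSpace ℝ (Fin k) → ℝ)
    (hp_meas : Measurable (Function.uncurry p))
    (hp_pos : ∀ θ x, 0 < p θ x)
    (hp_prob : ∀ θ, ∫ x, p θ x = 1)
    -- `g x = ∇_θ log p(x|·)`, with `L`-Lipschitz gradient for every `x`
    (g : EuclideanSpace ℝ (Fin k) → EuclideanSpace ℝ (Fin d) → EuclideanSpace ℝ (Fin d))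
    (hg : ∀ x θ, HasGradientAt (fun θ' => Real.log (p θ' x)) (g x θ) θ)
    (hgLip : ∀ x, LipschitzWith (Real.toNNReal L) (g x))
    -- the normalizing constants `Z_σ(θt; x) ∈ (0, ∞)`
    (Z : EuclideanSpace ℝ (Fin k) → ℝ)
    (hZ : ∀ x, Z x = ∫ θ, p θ x * gaussianProposal d σ θ θt)
    (hZ_int : ∀ x, Integrable (fun θ => p θ x * gaussianProposal d σ θ θt))
    (hZ_pos : ∀ x, 0 < Z x)
    -- the optimal FSM estimator `S*(x; θt)`, assumed well-defined
    (Sstar : EuclideanSpace ℝ (Fin k) → EuclideanSpace ℝ (Fin d))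
    (hSstar : ∀ x, Sstar x
      = ∫ θ, (p θ x * gaussianProposal d σ θ θt / Z x) • g x θ)
    (hSstar_int : ∀ x,
      Integrable (fun θ => (p θ x * gaussianProposal d σ θ θt / Z x) • g x θ))
    -- `M(x) = sup_θ p(x|θ)/Z_σ(θt;x)`, finite for a.e. x and integrable w.r.t. `p(·|θ*)`
    (M : EuclideanSpace ℝ (Fin k) → ℝ)
    (hM : ∀ x, M x = ⨆ θ : EuclideanSpace ℝ (Fin d), p θ x / Z x)
    (hM_fin : ∀ᵐ x, BddAbove (Set.range fun θ : EuclideanSpace ℝ (Fin d) => p θ x / Z x))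
    (hM_int : Integrable (fun x => M x * p θstar x)) :
    ∫⁻ x, ENNReal.ofReal (‖Sstar x - g x θt‖ * p θstar x)
      ≤ ENNReal.ofReal (L * Real.sqrt d * σ)
          * ∫⁻ x, ENNReal.ofReal (M x * p θstar x) :=
  fsm_bias_characterization_general d k θstar θt σ L hσ hL p hp_pos g hgLip Z hZ hZ_pos Sstar hSstar
    hSstar_int M hM hM_fin
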